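/- For all ordinals β < ε₀, natural numbers r and x, the Hardy hierarchy satisfies h^{ω^β · r}(x) = f_β^r(x), where f is the fast-growing hierarchy built from the same h. -/

import Mathlib

/-- Ordinal terms below ε₀: a term is a list of exponents,
`cons β γ` denoting ω^β + γ. -/
inductive OT : Type
  | nil : OT
  | cons : OT → OT → OT
deriving DecidableEq

namespace OT

/-- The term 1 = ω^0. -/
def one : OT := cons nil nil

/-- Syntactic concatenation (direct sum) of ordinal terms. -/
def add : OT → OT → OT
  | nil, b => b
  | cons e r, b => cons e (add r b)

/-- A term ω^{β₁}+...+ω^{β_m} is a successor iff m > 0 and β_m = 0. -/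
def isSucc : OT → Bool
  | nil => false
  | cons e nil => e == nil
  | cons _ (cons e r) => isSucc (cons e r)

/-- Remove the last summand ω^0 of a successor term. -/
def pred : OT → OT
  | nil => nil
  | cons _ nil => nil
  | cons e (cons e' r) => cons e (pred (cons e' r))

/-- Limit terms. -/
def isLim (a : OT) : Prop := a ≠ nil ∧ isSucc a = false

/-- ω^β · n as an ordinal term. -/
def rep : ℕ → OT → OT
  | 0, _ => nil
  | n + 1, β => cons β (rep n β)

/-- The standard assignment of fundamental sequences (with ω_x = x+1):
(γ+ω^{β+1})_x = γ+ω^β·(x+1) and (γ+ω^λ)_x = γ+ω^{λ_x}. -/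
def fseq : OT → ℕ → OT
  | nil, _ => nil
  | cons β nil, x =>
      if β = nil then nil
      else if isSucc β then rep (x + 1) (pred β)
      else cons (fseq β x) nil
  | cons β (cons e r), x => cons β (fseq (cons e r) x)

/-- Syntactic ordering of terms (on CNF terms this is the ordinal ordering). -/
def lt : OT → OT → Prop
  | _, nil => False
  | nil, cons _ _ => True
  | cons a r, cons b s => lt a b ∨ (a = b ∧ lt r s)

def le (a b : OT) : Prop := lt a b ∨ a = b

/-- Cantor normal form: exponents weakly decreasing, all in CNF. -/
def isCNF : OT → Prop
  | nil => True
  | cons b nil => isCNF b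
  | cons b (cons e r) => isCNF b ∧ le e b ∧ isCNF (cons e r)

/-- Number of occurrences of the exponent β in a term. -/
def count (β : OT) : OT → ℕ
  | nil => 0
  | cons b r => (if b = β then 1 else 0) + count β r

/-- k-lean: every coefficient (at every level) is ≤ k. -/
def leanOrd (k : ℕ) : OT → Prop
  | nil => True
  | cons b r => count b (cons b r) ≤ k ∧ leanOrd k b ∧ leanOrd k r

end OT

/-- Pointwise-at-x ordering: smallest transitive relation with
α ⊏_x α+1 and λ_x ⊏_x λ. -/
inductive Ptw (x : ℕ) : OT → OT → Prop
  | succ (a : OT) : Ptw x a (OT.add a OT.one)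
  | lim (l : OT) : OT.isLim l → Ptw x (OT.fseq l x) l
  | trans {a b c : OT} : Ptw x a b → Ptw x b c → Ptw x a c

/-!
Induction on the ordinal value of the terms. First `H (a + b) = H a ∘ H b` for the syntactic
sum, since `pred` and `fseq` act on the last summand only; hence `H (ω^β · r) = (H (ω^β))^[r]`.
Then `H (ω^β) = f β` by induction on `β`: at `β = 0` both sides are `h`, at a successor the
fundamental sequence `(ω^{β+1})_x = ω^β · (x+1)` turns `H` into the `(x+1)`-fold iterate
defining `f_{β+1}`, and at a limit both hierarchies descend to `β_x`.
-/

open Ordinal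

namespace OT

noncomputable def toOrdinal : OT → Ordinal.{0}
  | nil => 0
  | cons e r => ω ^ toOrdinal e + toOrdinal r

theorem cons_ne_nil (e r : OT) : cons e r ≠ nil := nofun

theorem toOrdinal_lt_wf : WellFounded fun a b : OT => a.toOrdinal < b.toOrdinal :=
  InvImage.wf toOrdinal wellFounded_lt

theorem add_nil : ∀ a : OT, add a nil = a
  | nil => rfl
  | cons e r => by rw [add, add_nil r]

theorem add_ne_nil (a : OT) {b : OT} (hb : b ≠ nil) : add a b ≠ nil := by
  cases a <;> simp [add, hb]

theorem isSucc_cons {r : OT} (hr : r ≠ nil) (e : OT) : isSucc (cons e r) = isSucc r := by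
  cases r
  · exact absurd rfl hr
  · rfl

theorem pred_cons {r : OT} (hr : r ≠ nil) (e : OT) : pred (cons e r) = cons e (pred r) := by
  cases r
  · exact absurd rfl hr
  · rfl

theorem fseq_cons {r : OT} (hr : r ≠ nil) (e : OT) (x : ℕ) :
    fseq (cons e r) x = cons e (fseq r x) := by
  cases r
  · exact absurd rfl hr
  · rfl

theorem isLim_of_not_isSucc {a : OT} (ha : a ≠ nil) (hs : ¬isSucc a = true) : isLim a :=
  ⟨ha, by simpa using hs⟩

theorem isSucc_add (a : OT) {b : OT} (hb : b ≠ nil) : isSucc (add a b) = isSucc b := by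
  induction a with
  | nil => rfl
  | cons e r _ ih => rw [add, isSucc_cons (add_ne_nil r hb), ih]

theorem isLim_add (a : OT) {b : OT} (hb : isLim b) : isLim (add a b) :=
  ⟨add_ne_nil a hb.1, by rw [isSucc_add a hb.1, hb.2]⟩

theorem pred_add (a : OT) {b : OT} (hb : b ≠ nil) : pred (add a b) = add a (pred b) := by
  induction a with
  | nil => rfl
  | cons e r _ ih => rw [add, pred_cons (add_ne_nil r hb), ih, add]

theorem fseq_add (a : OT) {b : OT} (hb : b ≠ nil) (x : ℕ) :
    fseq (add a b) x = add a (fseq b x) := by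
  induction a with
  | nil => rfl
  | cons e r _ ih => rw [add, fseq_cons (add_ne_nil r hb), ih, add]

theorem rep_succ (n : ℕ) (β : OT) : rep (n + 1) β = add (cons β nil) (rep n β) := rfl

theorem isLim_cons_nil {β : OT} (hβ : β ≠ nil) : isLim (cons β nil) :=
  ⟨cons_ne_nil β nil, by simpa [isSucc] using hβ⟩

theorem fseq_cons_nil_of_isSucc {β : OT} (hβ : isSucc β = true) (x : ℕ) :
    fseq (cons β nil) x = rep (x + 1) (pred β) := by
  have hβ0 : β ≠ nil := by rintro rfl; cases hβ
  simp [fseq, hβ0, hβ]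

theorem fseq_cons_nil_of_isLim {β : OT} (hβ : isLim β) (x : ℕ) :
    fseq (cons β nil) x = cons (fseq β x) nil := by
  simp [fseq, hβ.1, hβ.2]

theorem toOrdinal_of_isSucc :
    ∀ {a : OT}, isSucc a = true → a.toOrdinal = (pred a).toOrdinal + 1
  | nil, ha => by cases ha
  | cons e nil, ha => by
    obtain rfl : e = nil := by simpa [isSucc] using ha
    simp [toOrdinal, pred]
  | cons e (cons e' r), ha => by
    have ih := toOrdinal_of_isSucc (a := cons e' r) ha
    rw [pred_cons (cons_ne_nil e' r)]
    simp only [toOrdinal] at ih ⊢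
    rw [ih, add_assoc]

theorem toOrdinal_pred_lt {a : OT} (ha : isSucc a = true) : (pred a).toOrdinal < a.toOrdinal := by
  rw [toOrdinal_of_isSucc ha]
  exact lt_add_one _

theorem toOrdinal_rep_lt (γ : OT) (n : ℕ) : (rep n γ).toOrdinal < ω ^ (γ.toOrdinal + 1) := by
  induction n with
  | zero => exact opow_pos _ omega0_pos
  | succ n ih =>
    exact isPrincipal_add_omega0_opow _
      ((opow_lt_opow_iff_right one_lt_omega0).2 (lt_add_one _)) ih

theorem toOrdinal_fseq_lt : ∀ {a : OT}, isLim a → ∀ x, (fseq a x).toOrdinal < a.toOrdinal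
  | nil, ha, _ => absurd rfl ha.1
  | cons β nil, ha, x => by
    have hβ : β ≠ nil := by rintro rfl; exact Bool.false_ne_true ha.2.symm
    by_cases hs : isSucc β = true
    · rw [fseq_cons_nil_of_isSucc hs, toOrdinal, toOrdinal, add_zero, toOrdinal_of_isSucc hs]
      exact toOrdinal_rep_lt _ _
    · have hβl : isLim β := isLim_of_not_isSucc hβ hs
      rw [fseq_cons_nil_of_isLim hβl]
      simp only [toOrdinal, add_zero]
      exact (opow_lt_opow_iff_right one_lt_omega0).2 (toOrdinal_fseq_lt hβl x)
  | cons β (cons e r), ha, x => by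
    have hr : isLim (cons e r) :=
      ⟨cons_ne_nil e r, by rw [← ha.2, isSucc_cons (cons_ne_nil e r)]⟩
    rw [fseq_cons (cons_ne_nil e r), toOrdinal, toOrdinal]
    exact (add_lt_add_iff_left _).2 (toOrdinal_fseq_lt hr x)

end OT

open OT

structure IsHardyHierarchy (h : ℕ → ℕ) (H : OT → ℕ → ℕ) : Prop where
  zero : ∀ x, H nil x = x
  succ : ∀ a x, isSucc a = true → H a x = H (pred a) (h x)
  lim : ∀ a x, isLim a → H a x = H (fseq a x) x

structure IsFastGrowingHierarchy (h : ℕ → ℕ) (f : OT → ℕ → ℕ) : Prop where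
  zero : ∀ x, f nil x = h x
  succ : ∀ a x, isSucc a = true → f a x = (f (pred a))^[x + 1] x
  lim : ∀ a x, isLim a → f a x = f (fseq a x) x

namespace IsHardyHierarchy

variable {h : ℕ → ℕ} {H : OT → ℕ → ℕ}

theorem apply_add (hH : IsHardyHierarchy h H) (a b : OT) (x : ℕ) :
    H (OT.add a b) x = H a (H b x) := by
  induction b using toOrdinal_lt_wf.induction generalizing x with
  | _ b ih =>
  by_cases hb : b = nil
  · rw [hb, add_nil, hH.zero]
  by_cases hs : isSucc b = true
  · rw [hH.succ _ _ (by rwa [isSucc_add a hb]), pred_add a hb, ih _ (toOrdinal_pred_lt hs),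
      ← hH.succ _ _ hs]
  · have hl : isLim b := isLim_of_not_isSucc hb hs
    rw [hH.lim _ _ (isLim_add a hl), fseq_add a hb, ih _ (toOrdinal_fseq_lt hl x),
      ← hH.lim _ _ hl]

theorem rep_eq_iterate (hH : IsHardyHierarchy h H) (r : ℕ) (β : OT) :
    H (OT.rep r β) = (H (cons β nil))^[r] := by
  induction r with
  | zero => exact funext hH.zero
  | succ r ih =>
    funext x
    rw [rep_succ, hH.apply_add, ih, Function.iterate_succ_apply']

theorem omegaPow_eq {f : OT → ℕ → ℕ} (hH : IsHardyHierarchy h H)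
    (hf : IsFastGrowingHierarchy h f) (β : OT) : H (cons β nil) = f β := by
  induction β using toOrdinal_lt_wf.induction with
  | _ β ih =>
  funext x
  by_cases hβ : β = nil
  · subst hβ
    rw [hH.succ _ _ rfl, OT.pred, hH.zero, hf.zero]
  rw [hH.lim _ _ (isLim_cons_nil hβ)]
  by_cases hs : isSucc β = true
  · rw [fseq_cons_nil_of_isSucc hs, hH.rep_eq_iterate, ih _ (toOrdinal_pred_lt hs), hf.succ _ _ hs]
  · have hl : isLim β := isLim_of_not_isSucc hβ hs
    rw [fseq_cons_nil_of_isLim hl, ih _ (toOrdinal_fseq_lt hl x), hf.lim _ _ hl]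

end IsHardyHierarchy

/-- h^{ω^β · r}(x) = f_β^r(x), where `H` is the Hardy hierarchy and `f` the
fast-growing hierarchy built from the same control h (with ω_x = x+1). -/
theorem stmt14 (h : ℕ → ℕ) (H : OT → ℕ → ℕ) (f : OT → ℕ → ℕ)
    (hH0 : ∀ x, H OT.nil x = x)
    (hHs : ∀ a x, OT.isSucc a = true → H a x = H (OT.pred a) (h x))
    (hHl : ∀ a x, OT.isLim a → H a x = H (OT.fseq a x) x)
    (hf0 : ∀ x, f OT.nil x = h x)
    (hfs : ∀ a x, OT.isSucc a = true → f a x = (f (OT.pred a))^[x + 1] x)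
    (hfl : ∀ a x, OT.isLim a → f a x = f (OT.fseq a x) x) :
    ∀ (b : OT) (r x : ℕ), H (OT.rep r b) x = (f b)^[r] x := by
  intro b r x
  have hH : IsHardyHierarchy h H := ⟨hH0, hHs, hHl⟩
  have hf : IsFastGrowingHierarchy h f := ⟨hf0, hfs, hfl⟩
  rw [hH.rep_eq_iterate, hH.omegaPow_eq hf]
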